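/- arXiv:1407.3039 — 2 statements merged into one kernel-verified Lean document; each statement's English description precedes it below -/
import Mathlib

section
/- Let (Ω, H, E) be a nonlinear expectation space with n > 1 (E is monotone and constant preserving). If the n-dimensional Jensen inequality holds — i.e., for every convex h : ℝⁿ → ℝ and X₁, ..., Xₙ ∈ H with h(X₁,...,Xₙ) ∈ H one has E[h(X₁,...,Xₙ)] ≥ h(E[X₁],...,E[Xₙ]) — then E is linear: E[λX + γY] = λE[X] + γE[Y] for all λ, γ ∈ ℝ and X, Y ∈ H. -/
/-!
Jensen's inequality applied to the linear (hence convex) function `x ↦ a x₀ + b x₁` gives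
`a E[U] + b E[V] ≤ E[aU + bV]` for all real `a, b`, including negative ones. Taking `(a, b)` and
`(-a, -b)` bounds `E[W]` and `E[-W]` from below, while `E[W] + E[-W] ≤ E[0] = 0` bounds their sum
from above, so all three inequalities are equalities.
-/

theorem Submodule.linear_of_superlinear {M : Type*} [AddCommGroup M] [Module ℝ M]
    (H : Submodule ℝ M) (E : M → ℝ) (hzero : E 0 = 0)
    (hsup : ∀ a b : ℝ, ∀ U V : M, U ∈ H → V ∈ H → a * E U + b * E V ≤ E (a • U + b • V))
    {X Y : M} (hX : X ∈ H) (hY : Y ∈ H) (l g : ℝ) :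
    E (l • X + g • Y) = l * E X + g * E Y := by
  set W := l • X + g • Y
  have hW : W ∈ H := H.add_mem (H.smul_mem l hX) (H.smul_mem g hY)
  have lower := hsup l g X Y hX hY
  have lower_neg := hsup (-l) (-g) X Y hX hY
  have sum_le := hsup 1 1 W (-W) hW (H.neg_mem hW)
  rw [neg_smul, neg_smul, ← neg_add] at lower_neg
  rw [one_smul, one_smul, add_neg_cancel, hzero] at sum_le
  linarith

theorem superlinear_of_jensen {Ω : Type*} {n : ℕ} (hn : 1 < n)
    (H : Submodule ℝ (Ω → ℝ)) (E : (Ω → ℝ) → ℝ)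
    (hjensen : ∀ h : (Fin n → ℝ) → ℝ, ConvexOn ℝ Set.univ h →
      ∀ X : Fin n → (Ω → ℝ), (∀ i, X i ∈ H) →
        (fun ω => h (fun i => X i ω)) ∈ H →
        E (fun ω => h (fun i => X i ω)) ≥ h (fun i => E (X i)))
    (a b : ℝ) {U V : Ω → ℝ} (hU : U ∈ H) (hV : V ∈ H) :
    a * E U + b * E V ≤ E (a • U + b • V) := by
  obtain ⟨m, rfl⟩ : ∃ m, n = m + 2 := ⟨n - 2, by omega⟩
  let φ : (Fin (m + 2) → ℝ) →ₗ[ℝ] ℝ := a • LinearMap.proj 0 + b • LinearMap.proj 1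
  let X : Fin (m + 2) → (Ω → ℝ) := fun i => if i = 0 then U else V
  have hX : ∀ i, X i ∈ H := fun i => by by_cases hi : i = 0 <;> simp [X, hi, hU, hV]
  have hφX : (fun ω => φ (fun i => X i ω)) = a • U + b • V := by
    funext ω
    simp [φ, X]
  have hφEX : φ (fun i => E (X i)) = a * E U + b * E V := by
    simp [φ, X]
  have hmem : (fun ω => φ (fun i => X i ω)) ∈ H := by
    rw [hφX]
    exact H.add_mem (H.smul_mem a hU) (H.smul_mem b hV)
  have jensen := hjensen φ (φ.convexOn convex_univ) X hX hmem
  rwa [hφX, hφEX] at jensen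

theorem jensen_implies_linear_general
    {Ω : Type*} (n : ℕ) (hn : 1 < n)
    (H : Submodule ℝ (Ω → ℝ)) (E : (Ω → ℝ) → ℝ)
    (hconst : ∀ c : ℝ, E (fun _ : Ω => c) = c)
    (hjensen : ∀ h : (Fin n → ℝ) → ℝ, ConvexOn ℝ Set.univ h →
      ∀ X : Fin n → (Ω → ℝ), (∀ i, X i ∈ H) →
        (fun ω => h (fun i => X i ω)) ∈ H →
        E (fun ω => h (fun i => X i ω)) ≥ h (fun i => E (X i))) :
    ∀ X Y : Ω → ℝ, X ∈ H → Y ∈ H → ∀ l g : ℝ,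
      E (fun ω => l * X ω + g * Y ω) = l * E X + g * E Y := by
  intro X Y hX hY l g
  exact H.linear_of_superlinear E (hconst 0)
    (fun a b _ _ hU hV => superlinear_of_jensen hn H E hjensen a b hU hV) hX hY l g

/-- For `n > 1`, if a monotone, constant-preserving nonlinear expectation
satisfies the `n`-dimensional Jensen inequality, then it is linear. -/
theorem jensen_implies_linear
    {Ω : Type*} (n : ℕ) (hn : 1 < n)
    (H : Submodule ℝ (Ω → ℝ)) (E : (Ω → ℝ) → ℝ)
    (hconst_mem : ∀ c : ℝ, (fun _ : Ω => c) ∈ H)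
    (hmono : ∀ X Y : Ω → ℝ, X ∈ H → Y ∈ H → (∀ ω, Y ω ≤ X ω) → E Y ≤ E X)
    (hconst : ∀ c : ℝ, E (fun _ : Ω => c) = c)
    (hjensen : ∀ h : (Fin n → ℝ) → ℝ, ConvexOn ℝ Set.univ h →
      ∀ X : Fin n → (Ω → ℝ), (∀ i, X i ∈ H) →
        (fun ω => h (fun i => X i ω)) ∈ H →
        E (fun ω => h (fun i => X i ω)) ≥ h (fun i => E (X i))) :
    ∀ X Y : Ω → ℝ, X ∈ H → Y ∈ H → ∀ l g : ℝ,
      E (fun ω => l * X ω + g * Y ω) = l * E X + g * E Y :=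
  jensen_implies_linear_general n hn H E hconst hjensen
end

section
/- Let G : S_d → ℝ be a sublinear, monotone function on the space S_d of d×d real symmetric matrices (G(A+B) ≤ G(A)+G(B), G(λA) = λG(λA) for λ ≥ 0, and A ≥ B in the Loewner order implies G(A) ≥ G(B)). Then there exists a bounded, closed, convex subset Γ of the nonnegative-definite symmetric matrices S_d⁺ such that G(A) = (1/2) sup_{γ ∈ Γ} tr(γA) for all A ∈ S_d. -/
/-!
Extend `G` to all matrices by `X ↦ G ((X + Xᵀ) / 2)`. This extension is sublinear, so by
Hahn–Banach each symmetric `A` carries a linear minorant of `G` that agrees with `G` at `A`;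
on symmetric matrices such a minorant is `B ↦ tr (γ B) / 2` for a symmetric `γ`. Take `Γ` to be all
symmetric `γ` with `tr (γ B) ≤ 2 G(B)` for every symmetric `B`: an intersection of closed
half-spaces, whose supremum `2 G(A)` at `A` is attained. Monotonicity gives `G(-x xᵀ) ≤ G(0) = 0`,
hence `xᵀ γ x ≥ 0`, and the entries of a positive semidefinite `γ` are bounded by
`tr γ = tr (γ 1) ≤ 2 G(1)`.
-/

open Matrix

section Sublinear

variable {E : Type*} [AddCommGroup E] [Module ℝ E] {N : E → ℝ}

theorem map_zero_of_posHomogeneous (N_hom : ∀ c : ℝ, 0 < c → ∀ x, N (c • x) = c * N x) :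
    N 0 = 0 := by
  have h := N_hom 2 two_pos 0
  rw [smul_zero] at h
  linarith

theorem mul_le_map_smul_of_sublinear (N_hom : ∀ c : ℝ, 0 < c → ∀ x, N (c • x) = c * N x)
    (N_add : ∀ x y, N (x + y) ≤ N x + N y) (c : ℝ) (x : E) : c * N x ≤ N (c • x) := by
  have N_zero := map_zero_of_posHomogeneous N_hom
  rcases lt_trichotomy c 0 with hc | rfl | hc
  · have h := N_add x (-x)
    rw [add_neg_cancel, N_zero] at h
    rw [← neg_neg c, neg_smul, ← smul_neg, N_hom _ (neg_pos.2 hc)]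
    nlinarith
  · simp [N_zero]
  · exact (N_hom c hc x).ge

theorem exists_linearMap_le_sublinear_eq (N_hom : ∀ c : ℝ, 0 < c → ∀ x, N (c • x) = c * N x)
    (N_add : ∀ x y, N (x + y) ≤ N x + N y) (x : E) :
    ∃ g : E →ₗ[ℝ] ℝ, g x = N x ∧ ∀ y, g y ≤ N y := by
  let f : E →ₗ.[ℝ] ℝ := LinearPMap.mkSpanSingleton' x (N x) fun c hc => by
    rcases smul_eq_zero.1 hc with rfl | rfl
    · exact zero_smul ℝ _
    · rw [map_zero_of_posHomogeneous N_hom, smul_zero]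
  obtain ⟨g, hgf, hgN⟩ := exists_extension_of_le_sublinear f N N_hom N_add <| by
    rintro ⟨y, hy⟩
    obtain ⟨c, rfl⟩ := Submodule.mem_span_singleton.1 hy
    exact (LinearPMap.mkSpanSingleton'_apply x (N x) _ c hy).trans_le
      (mul_le_map_smul_of_sublinear N_hom N_add c x)
  refine ⟨g, ?_, hgN⟩
  exact (hgf ⟨x, Submodule.mem_span_singleton_self x⟩).trans
    (LinearPMap.mkSpanSingleton'_apply_self x (N x) _ _)

end Sublinear

section TraceDuality

variable {n R : Type*} [Fintype n] [DecidableEq n] [CommSemiring R]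

theorem Matrix.exists_trace_mul_eq (g : Matrix n n R →ₗ[R] R) :
    ∃ γ : Matrix n n R, ∀ X, (γ * X).trace = g X := by
  refine ⟨Matrix.of fun i j => g (single j i 1), fun X => ?_⟩
  conv_rhs => rw [matrix_eq_sum_single X]
  simp only [trace, diag, mul_apply, of_apply, map_sum]
  rw [Finset.sum_comm]
  refine Finset.sum_congr rfl fun j _ => Finset.sum_congr rfl fun i _ => ?_
  have hsingle : single j i (X j i) = X j i • single j i (1 : R) := by
    rw [smul_single, smul_eq_mul, mul_one]
  rw [hsingle, map_smul, smul_eq_mul, mul_comm]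

end TraceDuality

section Symmetrize

variable {n : Type*}

noncomputable def Matrix.symmetrize : Matrix n n ℝ →ₗ[ℝ] Matrix n n ℝ :=
  (2⁻¹ : ℝ) • (LinearMap.id + (transposeLinearEquiv n n ℝ ℝ).toLinearMap)

theorem Matrix.symmetrize_apply (X : Matrix n n ℝ) : symmetrize X = (2⁻¹ : ℝ) • (X + Xᵀ) := rfl

theorem Matrix.isSymm_symmetrize (X : Matrix n n ℝ) : (symmetrize X).IsSymm := by
  simp [symmetrize_apply, IsSymm, add_comm]

theorem Matrix.IsSymm.symmetrize_eq {A : Matrix n n ℝ} (hA : A.IsSymm) : symmetrize A = A := by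
  rw [symmetrize_apply, hA.eq, ← two_smul ℝ A, smul_smul, inv_mul_cancel₀ two_ne_zero, one_smul]

variable {G : Matrix n n ℝ → ℝ}

theorem Matrix.exists_linearMap_le_on_isSymm
    (hsubadd : ∀ A B : Matrix n n ℝ, A.IsSymm → B.IsSymm → G (A + B) ≤ G A + G B)
    (hposhom : ∀ l : ℝ, 0 ≤ l → ∀ A : Matrix n n ℝ, A.IsSymm → G (l • A) = l * G A)
    {A₀ : Matrix n n ℝ} (hA₀ : A₀.IsSymm) :
    ∃ g : Matrix n n ℝ →ₗ[ℝ] ℝ, g A₀ = G A₀ ∧ ∀ A : Matrix n n ℝ, A.IsSymm → g A ≤ G A := by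
  obtain ⟨g, hgA₀, hgG⟩ := exists_linearMap_le_sublinear_eq (N := G ∘ symmetrize)
    (fun c hc X => by
      simp only [Function.comp, map_smul, hposhom c hc.le _ (isSymm_symmetrize X)])
    (fun X Y => by
      simp only [Function.comp, map_add, hsubadd _ _ (isSymm_symmetrize X) (isSymm_symmetrize Y)])
    A₀
  refine ⟨g, by rw [hgA₀, Function.comp, hA₀.symmetrize_eq], fun A hA => ?_⟩
  simpa only [Function.comp, hA.symmetrize_eq] using hgG A

end Symmetrize

section RepresentingSet

variable {n : Type*} [Fintype n]

theorem Matrix.exists_isSymm_trace_mul_eq [DecidableEq n] (g : Matrix n n ℝ →ₗ[ℝ] ℝ) :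
    ∃ γ : Matrix n n ℝ, γ.IsSymm ∧ ∀ A : Matrix n n ℝ, A.IsSymm → (γ * A).trace = 2 * g A := by
  obtain ⟨γ, hγ⟩ := exists_trace_mul_eq g
  refine ⟨γ + γᵀ, ?_, fun A hA => ?_⟩
  · simp [IsSymm, add_comm]
  · rw [add_mul, trace_add, hγ, ← trace_transpose (γᵀ * A), transpose_mul, transpose_transpose,
      hA.eq, trace_mul_comm, hγ, two_mul]

def Matrix.representingSet (G : Matrix n n ℝ → ℝ) : Set (Matrix n n ℝ) :=
  {γ | γ.IsSymm ∧ ∀ A : Matrix n n ℝ, A.IsSymm → (γ * A).trace ≤ 2 * G A}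

variable {G : Matrix n n ℝ → ℝ}

theorem Matrix.isClosed_representingSet : IsClosed (representingSet G) := by
  simp only [representingSet, IsSymm, Set.ofPred_and, Set.ofPred_forall]
  exact (isClosed_eq continuous_id.matrix_transpose continuous_id).inter <|
    isClosed_iInter fun A => isClosed_iInter fun _ =>
      isClosed_le (continuous_id.matrix_mul continuous_const).matrix_trace continuous_const

theorem Matrix.convex_representingSet : Convex ℝ (representingSet G) := by
  rintro γ ⟨hγ, hγG⟩ δ ⟨hδ, hδG⟩ a b ha hb hab
  refine ⟨(hγ.smul a).add (hδ.smul b), fun A hA => ?_⟩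
  rw [add_mul, smul_mul, smul_mul, trace_add, trace_smul, trace_smul, smul_eq_mul, smul_eq_mul]
  calc a * (γ * A).trace + b * (δ * A).trace ≤ a * (2 * G A) + b * (2 * G A) := by
        gcongr
        exacts [hγG A hA, hδG A hA]
    _ = 2 * G A := by rw [← add_mul, hab, one_mul]

theorem Matrix.exists_mem_representingSet_trace_mul_eq [DecidableEq n]
    (hsubadd : ∀ A B : Matrix n n ℝ, A.IsSymm → B.IsSymm → G (A + B) ≤ G A + G B)
    (hposhom : ∀ l : ℝ, 0 ≤ l → ∀ A : Matrix n n ℝ, A.IsSymm → G (l • A) = l * G A)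
    {A₀ : Matrix n n ℝ} (hA₀ : A₀.IsSymm) :
    ∃ γ ∈ representingSet G, (γ * A₀).trace = 2 * G A₀ := by
  obtain ⟨g, hgA₀, hgG⟩ := exists_linearMap_le_on_isSymm hsubadd hposhom hA₀
  obtain ⟨γ, hγ, hγg⟩ := exists_isSymm_trace_mul_eq g
  refine ⟨γ, ⟨hγ, fun A hA => ?_⟩, by rw [hγg A₀ hA₀, hgA₀]⟩
  rw [hγg A hA]
  linarith [hgG A hA]

theorem Matrix.posSemidef_of_mem_representingSet
    (hmono : ∀ A B : Matrix n n ℝ, A.IsSymm → B.IsSymm → (A - B).PosSemidef → G B ≤ G A)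
    (hG0 : G 0 = 0) {γ : Matrix n n ℝ} (hγ : γ ∈ representingSet G) : γ.PosSemidef := by
  refine .of_dotProduct_mulVec_nonneg (isHermitian_iff_isSymm.2 hγ.1) fun x => ?_
  have hxx : (vecMulVec x x).IsSymm := by simp [IsSymm, transpose_vecMulVec]
  have hneg : G (-vecMulVec x x) ≤ 0 := hG0 ▸ hmono 0 _ isSymm_zero hxx.neg <| by
    simpa using posSemidef_vecMulVec_self_star x
  have htr : (γ * -vecMulVec x x).trace = -(x ⬝ᵥ γ *ᵥ x) := by
    rw [mul_neg, trace_neg, mul_vecMulVec, trace_vecMulVec, dotProduct_comm]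
  have hle := hγ.2 _ hxx.neg
  rw [htr] at hle
  rw [star_trivial]
  linarith

theorem Matrix.PosSemidef.abs_apply_le_trace [DecidableEq n] {γ : Matrix n n ℝ}
    (hγ : γ.PosSemidef) (i j : n) : |γ i j| ≤ γ.trace := by
  have quad (s : ℝ) : 0 ≤ γ i i + s * (γ i j + γ j i) + s ^ 2 * γ j j := by
    have := hγ.dotProduct_mulVec_nonneg (Pi.single i 1 + s • Pi.single j 1)
    simp only [star_trivial, mulVec_add, mulVec_single, MulOpposite.op_one, one_smul, mulVec_smul,
      dotProduct_add, add_dotProduct, single_dotProduct, col_apply, one_mul, smul_dotProduct,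
      smul_eq_mul, dotProduct_smul] at this
    linarith
  have hji : γ j i = γ i j := (isHermitian_iff_isSymm.1 hγ.isHermitian).apply i j
  have hdiag (k : n) : γ k k ≤ γ.trace :=
    Finset.single_le_sum (f := fun k => γ k k) (fun k _ => hγ.diag_nonneg) (Finset.mem_univ k)
  rw [abs_le]
  constructor <;> linarith [quad 1, quad (-1), hdiag i, hdiag j]

theorem Matrix.abs_apply_le_of_mem_representingSet [DecidableEq n]
    (hmono : ∀ A B : Matrix n n ℝ, A.IsSymm → B.IsSymm → (A - B).PosSemidef → G B ≤ G A)
    (hG0 : G 0 = 0) {γ : Matrix n n ℝ} (hγ : γ ∈ representingSet G) (i j : n) :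
    |γ i j| ≤ 2 * G 1 :=
  ((posSemidef_of_mem_representingSet hmono hG0 hγ).abs_apply_le_trace i j).trans <| by
    simpa using hγ.2 1 isSymm_one

theorem Matrix.sSup_trace_mul_representingSet [DecidableEq n]
    (hsubadd : ∀ A B : Matrix n n ℝ, A.IsSymm → B.IsSymm → G (A + B) ≤ G A + G B)
    (hposhom : ∀ l : ℝ, 0 ≤ l → ∀ A : Matrix n n ℝ, A.IsSymm → G (l • A) = l * G A)
    {A : Matrix n n ℝ} (hA : A.IsSymm) :
    sSup ((fun γ : Matrix n n ℝ => (γ * A).trace) '' representingSet G) = 2 * G A := by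
  obtain ⟨γ, hγ, hγA⟩ := exists_mem_representingSet_trace_mul_eq hsubadd hposhom hA
  refine IsGreatest.csSup_eq ⟨⟨γ, hγ, hγA⟩, ?_⟩
  rintro _ ⟨δ, hδ, rfl⟩
  exact hδ.2 A hA

end RepresentingSet

/-- A sublinear, monotone function `G` on the symmetric `d × d` real matrices
is represented as `G(A) = (1/2) sup_{γ ∈ Γ} tr(γA)` for a bounded, closed,
convex set `Γ` of nonnegative-definite symmetric matrices. -/
theorem sublinear_monotone_matrix_representation
    (d : ℕ) (G : Matrix (Fin d) (Fin d) ℝ → ℝ)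
    (hsubadd : ∀ A B : Matrix (Fin d) (Fin d) ℝ, A.IsSymm → B.IsSymm →
      G (A + B) ≤ G A + G B)
    (hposhom : ∀ (l : ℝ), 0 ≤ l → ∀ A : Matrix (Fin d) (Fin d) ℝ, A.IsSymm →
      G (l • A) = l * G A)
    (hmono : ∀ A B : Matrix (Fin d) (Fin d) ℝ, A.IsSymm → B.IsSymm →
      (A - B).PosSemidef → G B ≤ G A) :
    ∃ Γ : Set (Matrix (Fin d) (Fin d) ℝ),
      (∀ γ ∈ Γ, γ.IsSymm ∧ γ.PosSemidef) ∧
      (∃ C : ℝ, ∀ γ ∈ Γ, ∀ i j, |γ i j| ≤ C) ∧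
      IsClosed Γ ∧ Convex ℝ Γ ∧
      ∀ A : Matrix (Fin d) (Fin d) ℝ, A.IsSymm →
        G A = (1 / 2) * sSup ((fun γ : Matrix (Fin d) (Fin d) ℝ =>
          (γ * A).trace) '' Γ) := by
  have hG0 : G 0 = 0 := by simpa using hposhom 0 le_rfl 0 isSymm_zero
  refine ⟨representingSet G,
    fun γ hγ => ⟨hγ.1, posSemidef_of_mem_representingSet hmono hG0 hγ⟩,
    ⟨2 * G 1, fun γ hγ => abs_apply_le_of_mem_representingSet hmono hG0 hγ⟩,
    isClosed_representingSet, convex_representingSet, fun A hA => ?_⟩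
  rw [sSup_trace_mul_representingSet hsubadd hposhom hA]
  ring
end
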